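/- arXiv:1801.10132 — 4 statements merged into one kernel-verified Lean document; each statement's English description precedes it below -/
import Mathlib

section
/- If an interface flux f_{j+1/2} satisfies Tadmor's entropy conservation condition (v_{j+1} - v_j)ᵀ f_{j+1/2} = ψ_{j+1} - ψ_j for all j, then defining F_{j+1/2} = ½(v_j + v_{j+1})ᵀ f_{j+1/2} - ½(ψ_j + ψ_{j+1}), one has v_jᵀ (f_{j+1/2} - f_{j-1/2}) = F_{j+1/2} - F_{j-1/2}. -/
open Matrix

/-- If the interface fluxes satisfy Tadmor's entropy conservation condition,
then with `F_{j+1/2} = ½(v_j+v_{j+1})ᵀ f_{j+1/2} - ½(ψ_j+ψ_{j+1})` the cell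
entropy balance `v_jᵀ(f_{j+1/2} - f_{j-1/2}) = F_{j+1/2} - F_{j-1/2}` holds. -/
theorem tadmor_entropy_flux (N : ℕ) (v : ℤ → Fin N → ℝ) (ψ : ℤ → ℝ)
    (f : ℤ → Fin N → ℝ)
    (hEC : ∀ j : ℤ, (v (j + 1) - v j) ⬝ᵥ f j = ψ (j + 1) - ψ j) :
    ∀ j : ℤ,
      v j ⬝ᵥ (f j - f (j - 1)) =
        ((1 / 2) * ((v j + v (j + 1)) ⬝ᵥ f j) - (1 / 2) * (ψ j + ψ (j + 1)))
        - ((1 / 2) * ((v (j - 1) + v j) ⬝ᵥ f (j - 1))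
            - (1 / 2) * (ψ (j - 1) + ψ j)) := by
  intro j
  have h1 := hEC j
  have h2 := hEC (j - 1)
  simp only [sub_add_cancel] at h2
  simp only [sub_dotProduct, add_dotProduct, dotProduct_sub] at *
  linarith
end

section
/- Chandrasekhar's EC flux for the Euler equations, with z = (ρ, u, ρ/(2p)), given by f₁ = z₁^ln z̄₂, f₂ = z̄₁/(2z̄₃) + z̄₂ f₁, f₃ = (1/(2(γ−1)z₃^ln) − ½(z₂²)‾) f₁ + z̄₂ f₂, satisfies the entropy conservation condition (v_R − v_L)ᵀ f = [ρu]. -/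
/-- The logarithmic mean `a^ln = (y - x)/(ln y - ln x)`. -/
noncomputable def logMean (x y : ℝ) : ℝ := (y - x) / (Real.log y - Real.log x)

/-!
Write `β = ρ/(2p)` and `[a] = a_R - a_L`. Then `[v₂] = 2[βu]`, `[v₃] = -2[β]`, and, since
`ln p = ln ρ - ln β - ln 2`, `[v₁] = [ln ρ] + [ln β]/(γ-1) - [βu²]`. The logarithmic means are
exactly what turns the jumps of logarithms into jumps of the variables,
`ρ^ln [ln ρ] = [ρ]` and `β^ln [ln β] = [β]`; after that the identity is the discrete product rule
`[ab] = ā[b] + b̄[a]`, applied to `βu`, `βu²`, `u²` and finally `ρu`.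
-/

open Real

theorem logMean_mul_log_sub {x y : ℝ} (hx : 0 < x) (hy : 0 < y) (hxy : x ≠ y) :
    logMean x y * (log y - log x) = y - x := by
  have hlog : log y - log x ≠ 0 :=
    sub_ne_zero.2 fun h => hxy (log_injOn_pos hx hy h.symm)
  exact div_mul_cancel₀ _ hlog

theorem entropyVar1_eq (γ ρ u p : ℝ) (hγ : γ ≠ 1) (hρ : 0 < ρ) (hp : 0 < p) :
    (γ - (log p - γ * log ρ)) / (γ - 1) - 1 / 2 * (ρ * u ^ 2 / p) =
      (γ + log 2) / (γ - 1) + log ρ + log (ρ / (2 * p)) / (γ - 1) - ρ / (2 * p) * u ^ 2 := by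
  have hγ1 : γ - 1 ≠ 0 := sub_ne_zero.2 hγ
  rw [log_div hρ.ne' (by positivity), log_mul two_ne_zero hp.ne']
  field_simp
  ring

theorem chandrasekhar_flux_jump_identity (γ ρL ρR uL uR βL βR ρln βln lρ lβ f1 f2 f3 : ℝ)
    (hγ : γ ≠ 1) (hβ : βL ≠ βR) (hβsum : βL + βR ≠ 0)
    (hρln : ρln * lρ = ρR - ρL) (hβln : βln * lβ = βR - βL)
    (hf1 : f1 = ρln * ((uL + uR) / 2))
    (hf2 : f2 = (ρL + ρR) / 2 / (2 * ((βL + βR) / 2)) + (uL + uR) / 2 * f1)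
    (hf3 : f3 = (1 / (2 * (γ - 1) * βln) - 1 / 2 * ((uL ^ 2 + uR ^ 2) / 2)) * f1 +
      (uL + uR) / 2 * f2) :
    (lρ + lβ / (γ - 1) - (βR * uR ^ 2 - βL * uL ^ 2)) * f1 +
      2 * (βR * uR - βL * uL) * f2 - 2 * (βR - βL) * f3 = ρR * uR - ρL * uL := by
  have hβln0 : βln ≠ 0 := left_ne_zero_of_mul (hβln.trans_ne (sub_ne_zero.2 hβ.symm))
  have hγ1 : γ - 1 ≠ 0 := sub_ne_zero.2 hγ
  have hlβ : 2 * (βR - βL) * (1 / (2 * (γ - 1) * βln)) = lβ / (γ - 1) := by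
    rw [← hβln]; field_simp
  have hz1bar : (βL + βR) * ((ρL + ρR) / 2 / (2 * ((βL + βR) / 2))) = (ρL + ρR) / 2 := by
    field_simp
  subst hf3 hf2 hf1
  linear_combination (uL + uR) / 2 * hρln - ρln * ((uL + uR) / 2) * hlβ +
    (uR - uL) * hz1bar

/-- Chandrasekhar's entropy conservative flux for the 1D Euler equations,
built from `z = (ρ, u, ρ/(2p))`, satisfies the entropy conservation condition
`(v_R − v_L)ᵀ f = [ρu]`. -/
theorem chandrasekhar_EC_flux (γ ρL uL pL ρR uR pR : ℝ) (hγ : 1 < γ)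
    (hρL : 0 < ρL) (hpL : 0 < pL) (hρR : 0 < ρR) (hpR : 0 < pR)
    (hz1 : ρL ≠ ρR) (hz3 : ρL / (2 * pL) ≠ ρR / (2 * pR)) :
    let z1bar := (ρL + ρR) / 2
    let z2bar := (uL + uR) / 2
    let z3bar := (ρL / (2 * pL) + ρR / (2 * pR)) / 2
    let z2sqbar := (uL ^ 2 + uR ^ 2) / 2
    let z1ln := logMean ρL ρR
    let z3ln := logMean (ρL / (2 * pL)) (ρR / (2 * pR))
    let f1 := z1ln * z2bar
    let f2 := z1bar / (2 * z3bar) + z2bar * f1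
    let f3 := (1 / (2 * (γ - 1) * z3ln) - (1 / 2) * z2sqbar) * f1 + z2bar * f2
    let SL := Real.log pL - γ * Real.log ρL
    let SR := Real.log pR - γ * Real.log ρR
    let v1L := (γ - SL) / (γ - 1) - (1 / 2) * (ρL * uL ^ 2 / pL)
    let v1R := (γ - SR) / (γ - 1) - (1 / 2) * (ρR * uR ^ 2 / pR)
    let v2L := ρL * uL / pL; let v2R := ρR * uR / pR
    let v3L := -(ρL / pL); let v3R := -(ρR / pR)
    (v1R - v1L) * f1 + (v2R - v2L) * f2 + (v3R - v3L) * f3 =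
      ρR * uR - ρL * uL := by
  intro z1bar z2bar z3bar z2sqbar z1ln z3ln f1 f2 f3 SL SR v1L v1R v2L v2R v3L v3R
  have hγ1 : γ ≠ 1 := hγ.ne'
  have hv1 : v1R - v1L = log ρR - log ρL + (log (ρR / (2 * pR)) - log (ρL / (2 * pL))) / (γ - 1)
      - (ρR / (2 * pR) * uR ^ 2 - ρL / (2 * pL) * uL ^ 2) := by
    rw [show v1R = _ from entropyVar1_eq γ ρR uR pR hγ1 hρR hpR,
      show v1L = _ from entropyVar1_eq γ ρL uL pL hγ1 hρL hpL]
    ring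
  have hv2 : v2R - v2L = 2 * (ρR / (2 * pR) * uR - ρL / (2 * pL) * uL) := by
    simp only [v2R, v2L]; ring
  have hv3 : v3R - v3L = -(2 * (ρR / (2 * pR) - ρL / (2 * pL))) := by
    simp only [v3R, v3L]; ring
  rw [hv1, hv2, hv3]
  linear_combination chandrasekhar_flux_jump_identity γ ρL ρR uL uR _ _ z1ln z3ln _ _ f1 f2 f3
    hγ1 hz3 (by positivity) (logMean_mul_log_sub hρL hρR hz1)
    (logMean_mul_log_sub (by positivity) (by positivity) hz3) rfl rfl rfl
end

section
/- The alternative EC flux with z = (p, u, ρ/(2p)): f₁ = 2 z̄₃ z̄₂ z₁^ln, f₂ = ρ̄/(2z̄₃) + ū f₁, f₃ = f₁(γ/((γ−1)·2z₃^ln) − ½(z₂²)‾) + f₂ z̄₂ − z̄₁ z̄₂, satisfies the entropy conservation condition (v_R − v_L)ᵀ f = [ρu]; the term −z̄₁z̄₂ in f₃ is necessary. -/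
set_option maxHeartbeats 1000000 in
/-- The alternative kinetic energy preserving EC flux built from
`z = (p, u, ρ/(2p))`, including the term `−z̄₁z̄₂` in the energy flux,
satisfies the entropy conservation condition `(v_R − v_L)ᵀ f = [ρu]`. -/
theorem alternative_EC_flux (γ ρL uL pL ρR uR pR : ℝ) (hγ : 1 < γ)
    (hρL : 0 < ρL) (hpL : 0 < pL) (hρR : 0 < ρR) (hpR : 0 < pR)
    (hz1 : pL ≠ pR) (hz3 : ρL / (2 * pL) ≠ ρR / (2 * pR)) :
    let z1bar := (pL + pR) / 2
    let z2bar := (uL + uR) / 2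
    let z3bar := (ρL / (2 * pL) + ρR / (2 * pR)) / 2
    let ρbar := (ρL + ρR) / 2
    let z2sqbar := (uL ^ 2 + uR ^ 2) / 2
    let z1ln := logMean pL pR
    let z3ln := logMean (ρL / (2 * pL)) (ρR / (2 * pR))
    let f1 := 2 * z3bar * z2bar * z1ln
    let f2 := ρbar / (2 * z3bar) + z2bar * f1
    let f3 := f1 * (γ / (γ - 1) * (1 / (2 * z3ln)) - (1 / 2) * z2sqbar)
      + f2 * z2bar - z1bar * z2bar
    let SL := Real.log pL - γ * Real.log ρL
    let SR := Real.log pR - γ * Real.log ρR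
    let v1L := (γ - SL) / (γ - 1) - (1 / 2) * (ρL * uL ^ 2 / pL)
    let v1R := (γ - SR) / (γ - 1) - (1 / 2) * (ρR * uR ^ 2 / pR)
    let v2L := ρL * uL / pL; let v2R := ρR * uR / pR
    let v3L := -(ρL / pL); let v3R := -(ρR / pR)
    (v1R - v1L) * f1 + (v2R - v2L) * f2 + (v3R - v3L) * f3 =
      ρR * uR - ρL * uL := by
  intro z1bar z2bar z3bar ρbar z2sqbar z1ln z3ln f1 f2 f3 SL SR v1L v1R v2L v2R v3L v3R
  have h2pL : (0:ℝ) < 2 * pL := by linarith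
  have h2pR : (0:ℝ) < 2 * pR := by linarith
  show (v1R - v1L) * f1 + (v2R - v2L) * f2 + (v3R - v3L) * f3 = ρR * uR - ρL * uL
  simp only [v1L, v1R, v2L, v2R, v3L, v3R, f1, f2, f3, SL, SR, z1bar, z2bar, z3bar,
    ρbar, z2sqbar, z1ln, z3ln, logMean]
  obtain ⟨aL, haL, hρLeq⟩ : ∃ a, 0 < a ∧ ρL = 2 * pL * a :=
    ⟨ρL / (2 * pL), div_pos hρL h2pL, by field_simp⟩
  obtain ⟨aR, haR, hρReq⟩ : ∃ a, 0 < a ∧ ρR = 2 * pR * a :=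
    ⟨ρR / (2 * pR), div_pos hρR h2pR, by field_simp⟩
  rw [hρLeq, hρReq] at hz3 ⊢
  rw [mul_div_cancel_left₀ aL h2pL.ne', mul_div_cancel_left₀ aR h2pR.ne'] at hz3 ⊢
  have hlogρL : Real.log (2 * pL * aL) = Real.log 2 + Real.log pL + Real.log aL := by
    rw [Real.log_mul h2pL.ne' haL.ne', Real.log_mul two_ne_zero hpL.ne']
  have hlogρR : Real.log (2 * pR * aR) = Real.log 2 + Real.log pR + Real.log aR := by
    rw [Real.log_mul h2pR.ne' haR.ne', Real.log_mul two_ne_zero hpR.ne']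
  rw [hlogρL, hlogρR]
  have hLp : Real.log pR - Real.log pL ≠ 0 := by
    refine sub_ne_zero.mpr fun h => hz1 ?_
    rw [← Real.exp_log hpL, ← Real.exp_log hpR, h]
  have hLa : Real.log aR - Real.log aL ≠ 0 := by
    refine sub_ne_zero.mpr fun h => hz3 ?_
    rw [← Real.exp_log haL, ← Real.exp_log haR, h]
  have hba : aR - aL ≠ 0 := sub_ne_zero.mpr (Ne.symm hz3)
  have hab : aL + aR ≠ 0 := by positivity
  have hγ1 : γ - 1 ≠ 0 := by linarith
  generalize Real.log 2 = t
  generalize Real.log pL = x1 at hLp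
  generalize Real.log pR = x2 at hLp
  generalize Real.log aL = y1 at hLa
  generalize Real.log aR = y2 at hLa
  have hzln : (aR - aL) / (y2 - y1) ≠ 0 := div_ne_zero hba hLa
  field_simp
  ring
end

section
/- For the Euler equations, the intermediate state v^{n+1/2} = (v₁, v₂, v₃) with v₃ = −ρ̄/p^ln, v₂ = −ū v₃, v₁ = (1/(γ−1))(γρ̄/ρ^ln − S̄) − ū v₂ − ½(u²)‾ v₃ satisfies the time entropy-conservation condition (v^{n+1/2})ᵀ(uⁿ⁺¹ − uⁿ) = U(uⁿ⁺¹) − U(uⁿ) with U = −ρS/(γ−1), S = ln p − γ ln ρ. -/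
/-- The explicit "affordable" intermediate time state for the Euler equations
satisfies the time entropy-conservation condition
`(v^{n+1/2})ᵀ(uⁿ⁺¹ − uⁿ) = U(uⁿ⁺¹) − U(uⁿ)` with `U = −ρS/(γ−1)`,
`S = ln p − γ ln ρ`. -/
theorem euler_intermediate_state_EC (γ ρ0 u0 p0 ρ1 u1 p1 : ℝ) (hγ : 1 < γ)
    (hρ0 : 0 < ρ0) (hp0 : 0 < p0) (hρ1 : 0 < ρ1) (hp1 : 0 < p1)
    (hρ : ρ0 ≠ ρ1) (hp : p0 ≠ p1) :
    let ρbar := (ρ0 + ρ1) / 2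
    let ubar := (u0 + u1) / 2
    let usqbar := (u0 ^ 2 + u1 ^ 2) / 2
    let S0 := Real.log p0 - γ * Real.log ρ0
    let S1 := Real.log p1 - γ * Real.log ρ1
    let Sbar := (S0 + S1) / 2
    let ρln := logMean ρ0 ρ1
    let pln := logMean p0 p1
    let v3 := -(ρbar / pln)
    let v2 := -ubar * v3
    let v1 := (1 / (γ - 1)) * (γ * ρbar / ρln - Sbar)
      - ubar * v2 - (1 / 2) * usqbar * v3
    let ρE0 := p0 / (γ - 1) + (1 / 2) * ρ0 * u0 ^ 2
    let ρE1 := p1 / (γ - 1) + (1 / 2) * ρ1 * u1 ^ 2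
    let U0 := -(ρ0 * S0) / (γ - 1)
    let U1 := -(ρ1 * S1) / (γ - 1)
    v1 * (ρ1 - ρ0) + v2 * (ρ1 * u1 - ρ0 * u0) + v3 * (ρE1 - ρE0) =
      U1 - U0 := by
  have hlρ : Real.log ρ1 - Real.log ρ0 ≠ 0 := by
    refine sub_ne_zero.mpr fun h => hρ.symm ?_
    exact Real.log_injOn_pos (Set.mem_Ioi.mpr hρ1) (Set.mem_Ioi.mpr hρ0) h
  have hlp : Real.log p1 - Real.log p0 ≠ 0 := by
    refine sub_ne_zero.mpr fun h => hp.symm ?_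
    exact Real.log_injOn_pos (Set.mem_Ioi.mpr hp1) (Set.mem_Ioi.mpr hp0) h
  have hdρ : ρ1 - ρ0 ≠ 0 := sub_ne_zero.mpr hρ.symm
  have hdp : p1 - p0 ≠ 0 := sub_ne_zero.mpr hp.symm
  have hγ1 : γ - 1 ≠ 0 := sub_ne_zero.mpr (ne_of_gt hγ)
  simp only [logMean]
  field_simp
  ring
end
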